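/- (Theorem 4, Misidentification of the standard TWFE under CCC violations.) There exist K ≥ 1, a homogeneous treatment effect τ ∈ ℝ, group fixed effects α_s, α_{s′}, time fixed effects δ_{t₀}, δ_{t₁}, cell-specific covariate coefficients γ(a,b,k) that are not constant across cells (so the two-way common causal covariates assumption is violated), and covariate means m(a,b,k) satisfying, for every k, (m(s,t₁,k) − m(s′,t₁,k)) − (m(s,t₀,k) − m(s′,t₀,k)) = 0, such that in the resulting four-cell linear DiD model the DiD estimand (Y(s,t₁) − Y(s′,t₁)) − (Y(s,t₀) − Y(s′,t₀)) — which is what the standard TWFE regression without interacted covariates recovers — is not equal to τ. -/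

import Mathlib

/-!
The group and time fixed effects cancel in the difference-in-differences, so the DiD
estimand equals `τ` plus the DiD of the covariate contributions `γ(a,b,k) · m(a,b,k)`.
The per-covariate DiD condition only makes the means `m` parallel; once `γ` varies
across cells the products need not be. With one covariate of constant mean `1` whose
effect is `1` in the treated post-treatment cell and `0` elsewhere, the bias is `1`.
-/

/-- Expected cell outcome in the four-cell linear DiD model (group index: `0` =
treated `s`, `1` = control `s′`; time index: `0` = `t₀`, `1` = `t₁`). -/
def cellOutcome {K : ℕ} (α δ : Fin 2 → ℝ) (γ m : Fin 2 → Fin 2 → Fin K → ℝ)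
    (τ : ℝ) (a b : Fin 2) : ℝ :=
  α a + δ b + (if a = 0 ∧ b = 1 then τ else 0) + ∑ k, γ a b k * m a b k

def did (f : Fin 2 → Fin 2 → ℝ) : ℝ :=
  (f 0 1 - f 1 1) - (f 0 0 - f 1 0)

theorem did_cellOutcome {K : ℕ} (α δ : Fin 2 → ℝ) (γ m : Fin 2 → Fin 2 → Fin K → ℝ)
    (τ : ℝ) :
    did (cellOutcome α δ γ m τ) = τ + ∑ k, did (fun a b => γ a b k * m a b k) := by
  simp [did, cellOutcome, Finset.sum_sub_distrib]
  ring

/-- **Theorem 4, Misidentification of the standard TWFE under CCC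
violations.** There is a four-cell linear DiD model with `K ≥ 1` covariates whose
coefficients are not constant across cells (two-way CCC violated) and whose covariate
means satisfy the per-covariate DiD condition, in which the DiD estimand — what the
standard TWFE regression without interacted covariates recovers — differs from `τ`. -/
theorem standard_twfe_misidentified_under_ccc_violation :
    ∃ (K : ℕ) (α δ : Fin 2 → ℝ) (γ m : Fin 2 → Fin 2 → Fin K → ℝ) (τ : ℝ),
      1 ≤ K ∧
      (¬ ∀ (a b a' b' : Fin 2) (k : Fin K), γ a b k = γ a' b' k) ∧
      (∀ k, (m 0 1 k - m 1 1 k) - (m 0 0 k - m 1 0 k) = 0) ∧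
      (cellOutcome α δ γ m τ 0 1 - cellOutcome α δ γ m τ 1 1)
          - (cellOutcome α δ γ m τ 0 0 - cellOutcome α δ γ m τ 1 0) ≠ τ := by
  let γ : Fin 2 → Fin 2 → Fin 1 → ℝ := fun a b _ => if a = 0 ∧ b = 1 then 1 else 0
  let m : Fin 2 → Fin 2 → Fin 1 → ℝ := fun _ _ _ => 1
  have γ_not_constant : ¬ ∀ (a b a' b' : Fin 2) (k : Fin 1), γ a b k = γ a' b' k :=
    fun h => by simpa [γ] using h 0 1 0 0 0
  have covariate_bias : ∑ k, did (fun a b => γ a b k * m a b k) = 1 := by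
    simp [did, γ, m]
  refine ⟨1, 0, 0, γ, m, 0, le_rfl, γ_not_constant, fun _ => by ring, ?_⟩
  change did (cellOutcome 0 0 γ m 0) ≠ 0
  rw [did_cellOutcome, covariate_bias]
  norm_num
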